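/- Let (X, {V_x}) be a V-space and π : X → Y. Suppose there exist connected a, b ∈ X with π(a) ≠ π(b). Then it is not the case that every x ∈ X has a vicinity on which π is constant; i.e., Connectedness together with Supervenience implies the failure of Tolerance. -/
import Mathlib


def IsVSpace {X : Type*} (Vic : X → Set (Set X)) : Prop :=
  ∀ x, (Vic x).Nonempty ∧ ∀ V ∈ Vic x, x ∈ V

def IsCover {X : Type*} (Vic : X → Set (Set X)) (C : X → Set X) : Prop :=
  ∀ x, C x ∈ Vic x

def Chain {X : Type*} (C : X → Set X) (a b : X) : Prop :=
  ∃ (k : ℕ) (f : ℕ → X), f 0 = a ∧ f k = b ∧ ∀ j < k, (C (f j) ∩ C (f (j+1))).Nonempty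

def ConnectedIn {X : Type*} (Vic : X → Set (Set X)) (a b : X) : Prop :=
  ∀ C : X → Set X, IsCover Vic C → Chain C a b

theorem stmt6 {X Y : Type*} (Vic : X → Set (Set X)) (hV : IsVSpace Vic)
    (π : X → Y) (a b : X) (hconn : ConnectedIn Vic a b) (hab : π a ≠ π b) :
    ¬ (∀ x : X, ∃ V ∈ Vic x, ∀ y ∈ V, π y = π x) := by
  intro htol
  choose C hC hconst using htol
  obtain ⟨k, f, hf0, hfk, hchain⟩ := hconn C (fun x => hC x)
  have key : ∀ j ≤ k, π (f j) = π a := by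
    intro j hj
    induction j with
    | zero => rw [hf0]
    | succ n ih =>
      obtain ⟨z, hz1, hz2⟩ := hchain n (Nat.lt_of_succ_le hj)
      have h1 := hconst (f n) z hz1
      have h2 := hconst (f (n+1)) z hz2
      rw [← h2, h1, ih (Nat.le_of_succ_le hj)]
  exact hab (by rw [← hf0, ← hfk, key k le_rfl, hf0])
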